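/- In ℝ², let R_θ denote counterclockwise rotation by θ. Let Γ = {(x, (√3/2)R_{-π/2}x, (√3/2)R_{-π/2}x) : x ∈ ℝ²} ⊆ (ℝ²)³. Then Γ is c-monotone for c(x₁,x₂,x₃) = ⟨x₁,x₂⟩+⟨x₂,x₃⟩+⟨x₃,x₁⟩, indeed maximally c-monotone, and the induced linear map A₁ = √3·R_{-π/2} is not 3-cyclically monotone; consequently Γ is not a c-splitting set. -/

import Mathlib

open scoped BigOperators

noncomputable section

/-- The Euclidean inner product on `ℝ²`. -/
def ip (x y : Fin 2 → ℝ) : ℝ := x 0 * y 0 + x 1 * y 1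

/-- Counterclockwise rotation by `-π/2` in `ℝ²`: `(a, b) ↦ (b, -a)`. -/
def Rneg (x : Fin 2 → ℝ) : Fin 2 → ℝ := ![x 1, -x 0]

/-- The cost `c(x₁,x₂,x₃) = ⟨x₁,x₂⟩ + ⟨x₂,x₃⟩ + ⟨x₃,x₁⟩` on `(ℝ²)³`. -/
def cost3 (x : Fin 3 → Fin 2 → ℝ) : ℝ :=
  ip (x 0) (x 1) + ip (x 1) (x 2) + ip (x 2) (x 0)

/-- `Γ ⊆ (ℝ²)³` is `c`-monotone. -/
def CMono3 (Γ : Set (Fin 3 → Fin 2 → ℝ)) : Prop :=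
  ∀ u ∈ Γ, ∀ v ∈ Γ, ∀ K : Finset (Fin 3), K.Nonempty → K ≠ Finset.univ →
    0 ≤ ip (∑ i ∈ K, (u i - v i)) (∑ i ∈ Kᶜ, (u i - v i))

/-- The set `Γ = {(x, (√3/2)R_{-π/2}x, (√3/2)R_{-π/2}x) : x ∈ ℝ²}`. -/
def Γrot : Set (Fin 3 → Fin 2 → ℝ) :=
  {p | ∃ x : Fin 2 → ℝ,
    p 0 = x ∧ p 1 = (Real.sqrt 3 / 2) • Rneg x ∧ p 2 = (Real.sqrt 3 / 2) • Rneg x}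

/-! Write `Γₛ = {(x, sRx, sRx)}`, `R` the rotation by `-π/2`, so that `Γrot = Γ_{√3/2}`.
Since `⟨x, Rx⟩ = 0`, for the difference `(d, sRd, sRd)` of two points of `Γₛ` every pairing
`⟨Σ_K, Σ_Kᶜ⟩` is `0` or `s²|d|²`: this is `c`-monotonicity. A tuple `u` that is `c`-monotone
with `Γₛ` is tested against the points of `Γₛ` over `u₀ + g`, where `g = u₁ + u₂ - 2sRu₀`,
which gives `-|g|² ≥ 0`, and then over `u₀`, which gives `-|u₁ - sRu₀|² ≥ 0`.

A splitting `(uᵢ)` makes a set `c`-cyclically monotone: summed over a cycle of points, the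
splitting inequalities for the tuples with permuted coordinates add up to the equalities on the
points themselves. For the `3`-cycle moving only the first coordinate of points over
`a₁, a₂, a₃` this says that `A₁ = 2sR` is `3`-cyclically monotone, which fails for the triple
`(1, 0), (0, -2s), (-1, 0)` as soon as `s ≠ 0`. -/

lemma ip_eq_dotProduct (x y : Fin 2 → ℝ) : ip x y = x ⬝ᵥ y := by
  simp [ip, dotProduct, Fin.sum_univ_two]

lemma eq_zero_of_dotProduct_self_nonpos {n : Type*} [Fintype n] {v : n → ℝ}
    (h : v ⬝ᵥ v ≤ 0) : v = 0 :=
  dotProduct_self_eq_zero.mp (le_antisymm h (by simpa using dotProduct_self_star_nonneg v))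

lemma Rneg_add (x y : Fin 2 → ℝ) : Rneg (x + y) = Rneg x + Rneg y := by
  ext i; fin_cases i <;> simp [Rneg]; ring

lemma Rneg_sub (x y : Fin 2 → ℝ) : Rneg (x - y) = Rneg x - Rneg y := by
  ext i; fin_cases i <;> simp [Rneg]; ring

lemma dotProduct_Rneg_self (x : Fin 2 → ℝ) : x ⬝ᵥ Rneg x = 0 := by
  simp [Rneg, dotProduct, Fin.sum_univ_two]; ring

def CyclicallyMonotone3 (T : (Fin 2 → ℝ) → Fin 2 → ℝ) : Prop :=
  ∀ a₁ a₂ a₃ : Fin 2 → ℝ, ip (a₂ - a₁) (T a₁) + ip (a₃ - a₂) (T a₂) + ip (a₁ - a₃) (T a₃) ≤ 0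

theorem not_cyclicallyMonotone3_smul_Rneg {t : ℝ} (ht : t ≠ 0) :
    ¬ CyclicallyMonotone3 (fun x => t • Rneg x) := by
  intro h
  have h_cycle := h ![1, 0] ![0, -t] ![-1, 0]
  simp only [ip, Rneg, Pi.sub_apply, Pi.smul_apply, smul_eq_mul, Matrix.cons_val_zero,
    Matrix.cons_val_one] at h_cycle
  nlinarith [sq_pos_of_ne_zero ht]

def rotGraph (s : ℝ) : Set (Fin 3 → Fin 2 → ℝ) :=
  {p | ∃ x : Fin 2 → ℝ, p 0 = x ∧ p 1 = s • Rneg x ∧ p 2 = s • Rneg x}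

def rotGraphPt (s : ℝ) (x : Fin 2 → ℝ) : Fin 3 → Fin 2 → ℝ := ![x, s • Rneg x, s • Rneg x]

lemma rotGraphPt_mem (s : ℝ) (x : Fin 2 → ℝ) : rotGraphPt s x ∈ rotGraph s :=
  ⟨x, rfl, rfl, rfl⟩

lemma sub_mem_rotGraph {s : ℝ} {u v : Fin 3 → Fin 2 → ℝ} (hu : u ∈ rotGraph s)
    (hv : v ∈ rotGraph s) : u - v ∈ rotGraph s := by
  obtain ⟨x, hu0, hu1, hu2⟩ := hu
  obtain ⟨y, hv0, hv1, hv2⟩ := hv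
  exact ⟨x - y, by simp [hu0, hv0], by simp [hu1, hv1, Rneg_sub, smul_sub],
    by simp [hu2, hv2, Rneg_sub, smul_sub]⟩

lemma ip_sum_sum_compl_nonneg {s : ℝ} {p : Fin 3 → Fin 2 → ℝ} (hp : p ∈ rotGraph s)
    (K : Finset (Fin 3)) : 0 ≤ ip (∑ i ∈ K, p i) (∑ i ∈ Kᶜ, p i) := by
  obtain ⟨x, hp0, hp1, hp2⟩ := hp
  rw [eq_sub_of_add_eq (Finset.sum_compl_add_sum K p), Fin.sum_univ_three]
  fin_cases K <;> simp [ip, Rneg, hp0, hp1, hp2, Matrix.vecHead, Matrix.vecTail] <;>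
    nlinarith [sq_nonneg (s * x 0), sq_nonneg (s * x 1)]

theorem cMono3_rotGraph (s : ℝ) : CMono3 (rotGraph s) :=
  fun _ hu _ hv K _ _ => ip_sum_sum_compl_nonneg (sub_mem_rotGraph hu hv) K

lemma CMono3.ip_sub_nonneg {Γ : Set (Fin 3 → Fin 2 → ℝ)} (h : CMono3 Γ)
    {u v : Fin 3 → Fin 2 → ℝ} (hu : u ∈ Γ) (hv : v ∈ Γ) (j : Fin 3) :
    0 ≤ ip (u j - v j) (∑ i, (u i - v i) - (u j - v j)) := by
  have hK : ({j} : Finset (Fin 3)) ≠ Finset.univ := by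
    fin_cases j <;> decide
  simpa [eq_sub_of_add_eq (Finset.sum_compl_add_sum {j} (fun i => u i - v i))] using
    h u hu v hv {j} (Finset.singleton_nonempty j) hK

theorem mem_rotGraph_of_cMono3_union {s : ℝ} {u : Fin 3 → Fin 2 → ℝ}
    (h : CMono3 (rotGraph s ∪ {u})) : u ∈ rotGraph s := by
  have hu : u ∈ rotGraph s ∪ {u} := Or.inr rfl
  have hpt (y : Fin 2 → ℝ) : rotGraphPt s y ∈ rotGraph s ∪ {u} := Or.inl (rotGraphPt_mem s y)
  set g := u 1 + u 2 - (2 * s) • Rneg (u 0) with hg_def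
  have hg : g = 0 := by
    have h_test := h.ip_sub_nonneg hu (hpt (u 0 + g)) 0
    simp only [rotGraphPt, Fin.sum_univ_three, Matrix.cons_val_zero, Matrix.cons_val_one,
      Matrix.cons_val_two, Matrix.head_cons, Matrix.tail_cons, Rneg_add] at h_test
    have hval : ip (-g) (g - (2 * s) • Rneg g) = -(g ⬝ᵥ g) := by
      simp only [ip_eq_dotProduct, neg_dotProduct, dotProduct_sub, dotProduct_smul,
        dotProduct_Rneg_self, neg_zero, smul_zero, sub_zero]
    refine eq_zero_of_dotProduct_self_nonpos (neg_nonneg.mp (hval ▸ ?_))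
    convert h_test using 2
    · abel
    · linear_combination (norm := module) hg_def
  set e := u 1 - s • Rneg (u 0) with he_def
  have he : e = 0 := by
    have h_test := h.ip_sub_nonneg hu (hpt (u 0)) 1
    simp only [rotGraphPt, Fin.sum_univ_three, Matrix.cons_val_zero, Matrix.cons_val_one,
      Matrix.cons_val_two, Matrix.head_cons, Matrix.tail_cons] at h_test
    have hval : ip e (-e) = -(e ⬝ᵥ e) := by simp [ip_eq_dotProduct]
    refine eq_zero_of_dotProduct_self_nonpos (neg_nonneg.mp (hval ▸ ?_))
    convert h_test using 2
    linear_combination (norm := module) hg_def - he_def - hg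
  refine ⟨u 0, rfl, ?_, ?_⟩
  · linear_combination (norm := module) he - he_def
  · linear_combination (norm := module) hg - hg_def - he + he_def

def IsCSplitting {ι X : Type*} [Fintype ι] (c : (ι → X) → ℝ) (Γ : Set (ι → X)) : Prop :=
  ∃ u : ι → X → EReal,
    (∀ x, (c x : EReal) ≤ ∑ i, u i (x i)) ∧ ∀ x ∈ Γ, (c x : EReal) = ∑ i, u i (x i)

lemma EReal.coe_finset_sum {ι : Type*} (s : Finset ι) (f : ι → ℝ) :
    ((∑ i ∈ s, f i : ℝ) : EReal) = ∑ i ∈ s, (f i : EReal) :=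
  map_sum (⟨⟨Real.toEReal, EReal.coe_zero⟩, EReal.coe_add⟩ : ℝ →+ EReal) f s

theorem IsCSplitting.sum_cost_comp_perm_le {ι κ X : Type*} [Fintype ι] [Fintype κ]
    {c : (ι → X) → ℝ} {Γ : Set (ι → X)} (h : IsCSplitting c Γ) {p : κ → ι → X}
    (hp : ∀ k, p k ∈ Γ) (σ : ι → Equiv.Perm κ) :
    ∑ k, c (fun i => p (σ i k) i) ≤ ∑ k, c (p k) := by
  obtain ⟨u, hle, heq⟩ := h
  have : ((∑ k, c (fun i => p (σ i k) i) : ℝ) : EReal) ≤ ((∑ k, c (p k) : ℝ) : EReal) :=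
    calc ((∑ k, c (fun i => p (σ i k) i) : ℝ) : EReal)
        = ∑ k, (c (fun i => p (σ i k) i) : EReal) := EReal.coe_finset_sum _ _
      _ ≤ ∑ k, ∑ i, u i (p (σ i k) i) := Finset.sum_le_sum fun k _ => hle _
      _ = ∑ i, ∑ k, u i (p (σ i k) i) := Finset.sum_comm
      _ = ∑ i, ∑ k, u i (p k i) :=
        Finset.sum_congr rfl fun i _ => Equiv.sum_comp (σ i) fun k => u i (p k i)
      _ = ∑ k, ∑ i, u i (p k i) := Finset.sum_comm
      _ = ∑ k, (c (p k) : EReal) := Finset.sum_congr rfl fun k _ => (heq _ (hp k)).symm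
      _ = ((∑ k, c (p k) : ℝ) : EReal) := (EReal.coe_finset_sum _ _).symm
  exact_mod_cast this

lemma cost3_cons_smul_Rneg (s : ℝ) (x y : Fin 2 → ℝ) :
    cost3 ![x, s • Rneg y, s • Rneg y] =
      cost3 (rotGraphPt s y) + ip (x - y) ((2 * s) • Rneg y) := by
  simp [cost3, rotGraphPt, ip, Rneg]; ring

theorem IsCSplitting.cyclicallyMonotone3 {s : ℝ} (h : IsCSplitting cost3 (rotGraph s)) :
    CyclicallyMonotone3 (fun x => (2 * s) • Rneg x) := by
  intro a₁ a₂ a₃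
  set a : Fin 3 → Fin 2 → ℝ := ![a₁, a₂, a₃]
  have h_cycle := h.sum_cost_comp_perm_le (p := fun k => rotGraphPt s (a k))
    (fun k => rotGraphPt_mem s (a k)) ![finRotate 3, 1, 1]
  have hmix (k : Fin 3) : (fun i => rotGraphPt s (a (![finRotate 3, 1, 1] i k)) i) =
      ![a (finRotate 3 k), s • Rneg (a k), s • Rneg (a k)] := by
    ext i : 1; fin_cases i <;> rfl
  simp only [hmix, cost3_cons_smul_Rneg, Finset.sum_add_distrib, add_le_iff_nonpos_right] at h_cycle
  simpa [Fin.sum_univ_three, a] using h_cycle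

/-- `Γrot` is (maximally) `c`-monotone, the induced map `A₁ = √3 R_{-π/2}` is not
`3`-cyclically monotone, and consequently `Γrot` is not a `c`-splitting set. -/
theorem rotation_example :
    CMono3 Γrot ∧
    (∀ u : Fin 3 → Fin 2 → ℝ, CMono3 (Γrot ∪ {u}) → u ∈ Γrot) ∧
    ¬(∀ a₁ a₂ a₃ : Fin 2 → ℝ,
        ip (a₂ - a₁) (Real.sqrt 3 • Rneg a₁) + ip (a₃ - a₂) (Real.sqrt 3 • Rneg a₂) +
          ip (a₁ - a₃) (Real.sqrt 3 • Rneg a₃) ≤ 0) ∧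
    ¬∃ u : Fin 3 → (Fin 2 → ℝ) → EReal,
        (∀ x : Fin 3 → Fin 2 → ℝ, ((cost3 x : ℝ) : EReal) ≤ ∑ i, u i (x i)) ∧
        (∀ x ∈ Γrot, ((cost3 x : ℝ) : EReal) = ∑ i, u i (x i)) := by
  refine ⟨cMono3_rotGraph _, fun _ => mem_rotGraph_of_cMono3_union,
    not_cyclicallyMonotone3_smul_Rneg (by positivity), fun h => ?_⟩
  exact not_cyclicallyMonotone3_smul_Rneg (by positivity)
    (IsCSplitting.cyclicallyMonotone3 (s := Real.sqrt 3 / 2) h)
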